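/- Let L be a totally ordered normal incline and let A be an n×n completely positive matrix over L (A = B * Bᵀ for some n×m matrix B over L). Then the CP-rank of A is at most max{n, ⌊n²/4⌋}: there exist k ≤ max{n, ⌊n²/4⌋} and an n×k matrix B' over L with A = B' * B'ᵀ. (This is the incline analogue of the Drew–Johnson–Loewy bound.) -/

import Mathlib

/-!
Addition in an incline is the join, so `A = ∑ₖ cₖ cₖᵀ` exactly when every `cₖ cₖᵀ` lies below `A`
entrywise and every entry of `A` is attained by some `cₖ cₖᵀ`. Cauchy–Schwarz (from the
AG-property) and the LI-property give a symmetric `W` with `A x y ^ 2 = A x x * A y y * W x y`.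
The star column `c j = √(A j j)`, `c p = √(A p p * W p j)` for `p ∈ S` attains row `j` of `A`
on `S ∪ {j}`, and lies below `A` when `W p j * W q j ≤ W p q` for all leaves `p ≠ q`.

If `(u, v)` maximizes `W` over the pairs of an `r`-element vertex set, the star at `u` with leaf
`v` and the stars at all other vertices with leaves `{u, v}` are such columns: `r - 1` of them
attain every entry in rows `u` and `v`, and `r - 1 + ⌊(r - 2)² / 4⌋ = ⌊r² / 4⌋` by induction.
Only the diagonal entry at `v` is missed. For `r ≥ 4` this can be traded at no cost for the
diagonal entry at the next pivot, which the next step attains; for `r ≤ 3` one extra column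
stays within the bound `r`.
-/

open Matrix Finset

theorem Finset.sum_le_of_forall_le {L ι : Type*} [IdemSemiring L] {s : Finset ι} {f : ι → L}
    {a : L} (h : ∀ i ∈ s, f i ≤ a) : ∑ i ∈ s, f i ≤ a :=
  sum_induction f (· ≤ a) (fun _ _ => add_le) zero_le h

theorem Nat.add_two_sq_div_four (r : ℕ) : (r + 2) ^ 2 / 4 = r ^ 2 / 4 + (r + 1) := by
  rw [show (r + 2) ^ 2 = r ^ 2 + (r + 1) * 4 by ring, Nat.add_mul_div_right _ _ (by norm_num)]

/-- In the order of an idempotent semiring the incline law `a + a * b = a` reads `a * b ≤ a`. -/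
class IsNormalIncline (L : Type*) [IdemCommSemiring L] : Prop where
  mul_le_left (a b : L) : a * b ≤ a
  exists_eq_mul_of_le {a b : L} : a ≤ b → ∃ c, a = b * c
  existsUnique_mul_self_eq (a : L) : ∃! c, c * c = a
  mul_le_mul_self_add_mul_self (a b : L) : a * b ≤ a * a + b * b

namespace IsNormalIncline

variable {L : Type*} [IdemCommSemiring L] [IsNormalIncline L]

noncomputable def sqrt (a : L) : L := (existsUnique_mul_self_eq a).exists.choose

lemma sqrt_mul_self (a : L) : sqrt a * sqrt a = a :=
  (existsUnique_mul_self_eq a).exists.choose_spec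

lemma eq_of_mul_self_eq {a b : L} (h : a * a = b * b) : a = b :=
  (existsUnique_mul_self_eq (b * b)).unique h rfl

lemma sqrt_mul_sqrt_mul_self (a b : L) : (sqrt a * sqrt b) * (sqrt a * sqrt b) = a * b := by
  rw [mul_mul_mul_comm, sqrt_mul_self, sqrt_mul_self]

lemma le_of_mul_self_le_mul_self {a b : L} (h : a * a ≤ b * b) : a ≤ b := by
  refine add_eq_right_iff_le.1 (eq_of_mul_self_eq ?_)
  calc (a + b) * (a + b) = a * b + a * b + (a * a + b * b) := by ring
    _ = b * b := by
      rw [add_idem, (mul_le_mul_self_add_mul_self a b).add_eq_right, h.add_eq_right]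

lemma mul_le_sum_mul_self {ι : Type*} [Fintype ι] (f : ι → L) (k l : ι) :
    f k * f l ≤ ∑ i, f i * f i :=
  (mul_le_mul_self_add_mul_self _ _).trans <| add_le
    (single_le_sum (f := fun i => f i * f i) (fun _ _ => zero_le) (mem_univ k))
    (single_le_sum (f := fun i => f i * f i) (fun _ _ => zero_le) (mem_univ l))

lemma mul_transpose_self_apply_mul_self_le {V ι : Type*} [Fintype ι] (B : Matrix V ι L)
    (x y : V) : (B * Bᵀ) x y * (B * Bᵀ) x y ≤ (B * Bᵀ) x x * (B * Bᵀ) y y := by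
  simp only [mul_apply, transpose_apply]
  rw [sum_mul_sum]
  refine sum_le_of_forall_le fun k _ => sum_le_of_forall_le fun l _ => ?_
  calc B x k * B y k * (B x l * B y l) = (B x k * B x l) * (B y k * B y l) := by ring
    _ ≤ _ := mul_le_mul' (mul_le_sum_mul_self _ k l) (mul_le_sum_mul_self _ k l)

end IsNormalIncline

namespace CompletelyPositive

open IsNormalIncline

variable {L V : Type*} [IdemCommSemiring L]

def Admissible (A : Matrix V V L) (c : V → L) : Prop := ∀ p q, c p * c q ≤ A p q

def Covers (A : Matrix V V L) (cs : List (V → L)) (p q : V) : Prop :=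
  ∃ c ∈ cs, c p * c q = A p q

def CoversOffDiag (A : Matrix V V L) (cs : List (V → L)) (R : Finset V) : Prop :=
  ∀ x ∈ R, ∀ y ∈ R, x ≠ y → Covers A cs x y

/-- `W x y` plays the role of `A x y ^ 2 / (A x x * A y y)`. -/
structure IsSqCorrelation (A W : Matrix V V L) : Prop where
  isSymm : A.IsSymm
  isSymm_sq : W.IsSymm
  mul_self_eq (x y : V) : A x y * A x y = A x x * A y y * W x y

structure IsMaxPair (W : Matrix V V L) (R : Finset V) (u v : V) : Prop where
  left_mem : u ∈ R
  right_mem : v ∈ R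
  ne : u ≠ v
  le : ∀ x ∈ R, ∀ y ∈ R, x ≠ y → W x y ≤ W u v

structure PivotCover (A : Matrix V V L) (cs : List (V → L)) (R : Finset V) (u v z : V) :
    Prop where
  admissible : ∀ c ∈ cs, Admissible A c
  covers_left : ∀ x ∈ R, x ≠ u → Covers A cs x u
  covers_right : ∀ x ∈ R, x ≠ v → Covers A cs x v
  covers_diag : ∀ x ∈ R, x ≠ z → Covers A cs x x

variable {A W : Matrix V V L} {cs ds : List (V → L)} {R S T : Finset V} {j p q u v w x y z : V}

lemma Covers.mono (h : Covers A cs p q) (hsub : cs ⊆ ds) : Covers A ds p q :=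
  let ⟨c, hc, he⟩ := h; ⟨c, hsub hc, he⟩

lemma Covers.symm (h : Covers A cs p q) (hA : A.IsSymm) : Covers A cs q p :=
  let ⟨c, hc, he⟩ := h; ⟨c, hc, by rw [mul_comm, he, hA.apply]⟩

theorem eq_mul_transpose_of_covers [Fintype V] (hadm : ∀ c ∈ cs, Admissible A c)
    (hcov : ∀ p q, Covers A cs p q) :
    A = of (fun i (j : Fin cs.length) => cs[j] i) * (of fun i (j : Fin cs.length) => cs[j] i)ᵀ := by
  ext p q
  simp only [mul_apply, transpose_apply, of_apply]
  refine le_antisymm ?_ (sum_le_of_forall_le fun j _ => hadm _ (List.getElem_mem _) p q)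
  obtain ⟨c, hc, he⟩ := hcov p q
  obtain ⟨j, hj, rfl⟩ := List.getElem_of_mem hc
  exact he.symm.le.trans
    (single_le_sum (f := fun j : Fin cs.length => cs[j] p * cs[j] q) (fun _ _ => zero_le)
      (mem_univ ⟨j, hj⟩))

lemma IsMaxPair.symm (hm : IsMaxPair W R u v) (hW : W.IsSymm) : IsMaxPair W R v u :=
  ⟨hm.right_mem, hm.left_mem, hm.ne.symm,
    fun x hx y hy hxy => (hm.le x hx y hy hxy).trans_eq (hW.apply u v).symm⟩

lemma PivotCover.swap (h : PivotCover A cs R u v z) : PivotCover A cs R v u z :=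
  ⟨h.admissible, h.covers_right, h.covers_left, h.covers_diag⟩

lemma exists_isMaxPair [Std.Total (α := L) (· ≤ ·)] (W : Matrix V V L) (hR : 1 < R.card) :
    ∃ u v, IsMaxPair W R u v := by
  obtain ⟨a, ha, b, hb, hab⟩ := one_lt_card.1 hR
  obtain ⟨⟨u, v⟩, huv, hmax⟩ :=
    R.offDiag.exists_maximalFor (fun x => W x.1 x.2) ⟨(a, b), mem_offDiag.2 ⟨ha, hb, hab⟩⟩
  rw [mem_offDiag] at huv
  refine ⟨u, v, huv.1, huv.2.1, huv.2.2, fun x hx y hy hxy => ?_⟩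
  exact (total_of (· ≤ ·) (W u v) (W x y)).elim (@hmax (x, y) (mem_offDiag.2 ⟨hx, hy, hxy⟩)) id

section DecidableEq

variable [DecidableEq V]

lemma IsMaxPair.card_sdiff (hm : IsMaxPair W R u v) : (R \ {u, v}).card + 2 = R.card := by
  have hsub : {u, v} ⊆ R := insert_subset hm.left_mem (singleton_subset_iff.2 hm.right_mem)
  have := card_le_card hsub
  rw [card_sdiff_of_subset hsub, card_pair hm.ne] at *
  omega

lemma eq_or_eq_or_mem_sdiff_pair (hx : x ∈ R) : x = u ∨ x = v ∨ x ∈ R \ {u, v} := by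
  simp only [mem_sdiff, mem_insert, mem_singleton]
  tauto

lemma eq_or_eq_or_eq_or_mem_erase (hx : x ∈ R) :
    x = u ∨ x = v ∨ x = y ∨ x ∈ (R \ {u, v}).erase y := by
  simp only [mem_erase, mem_sdiff, mem_insert, mem_singleton]
  tauto

lemma PivotCover.coversOffDiag_append (h : PivotCover A cs R u v z) (hA : A.IsSymm)
    (hds : CoversOffDiag A ds (R \ {u, v})) : CoversOffDiag A (cs ++ ds) R := by
  have hl : cs ⊆ cs ++ ds := List.subset_append_left _ _
  intro x hx y hy hxy
  rcases eq_or_eq_or_mem_sdiff_pair (u := u) (v := v) hy with rfl | rfl | hy'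
  · exact (h.covers_left x hx hxy).mono hl
  · exact (h.covers_right x hx hxy).mono hl
  rcases eq_or_eq_or_mem_sdiff_pair (u := u) (v := v) hx with rfl | rfl | hx'
  · exact ((h.covers_left y hy hxy.symm).symm hA).mono hl
  · exact ((h.covers_right y hy hxy.symm).symm hA).mono hl
  · exact (hds x hx' y hy' hxy).mono (List.subset_append_right _ _)

lemma PivotCover.covers_append (h : PivotCover A cs R u v z) (hA : A.IsSymm)
    (hz : Covers A ds z z) (hds : CoversOffDiag A ds (R \ {u, v})) :
    ∀ x ∈ R, ∀ y ∈ R, Covers A (cs ++ ds) x y := by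
  intro x hx y hy
  rcases eq_or_ne x y with rfl | hxy
  · rcases eq_or_ne x z with rfl | hxz
    · exact hz.mono (List.subset_append_right _ _)
    · exact (h.covers_diag x hx hxz).mono (List.subset_append_left _ _)
  · exact h.coversOffDiag_append hA hds x hx y hy hxy

end DecidableEq

variable [IsNormalIncline L]

lemma exists_isSqCorrelation {ι : Type*} [Fintype ι] (B : Matrix V ι L) :
    ∃ W, IsSqCorrelation (B * Bᵀ) W := by
  set A := B * Bᵀ
  have hA : A.IsSymm := transpose_mul _ _
  choose W hW using fun x y => exists_eq_mul_of_le (mul_transpose_self_apply_mul_self_le B x y)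
  refine ⟨of W + (of W)ᵀ, hA, isSymm_add_transpose_self _, fun x y => ?_⟩
  calc A x y * A x y = A x y * A x y + A y x * A y x := by rw [hA.apply, add_idem]
    _ = A x x * A y y * (of W + (of W)ᵀ) x y := by
      rw [hW x y, hW y x, Matrix.add_apply, transpose_apply, of_apply, of_apply]; ring

variable [DecidableEq V]

noncomputable def starCol (A W : Matrix V V L) (j : V) (S : Finset V) : V → L := fun p =>
  if p = j then sqrt (A j j) else if p ∈ S then sqrt (A p p * W p j) else 0

lemma starCol_self : starCol A W j S j = sqrt (A j j) := if_pos rfl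

lemma starCol_of_mem (hp : p ∈ S) (hpj : p ≠ j) : starCol A W j S p = sqrt (A p p * W p j) := by
  simp [starCol, hp, hpj]

lemma starCol_of_notMem (hp : p ∉ insert j S) : starCol A W j S p = 0 := by
  rw [mem_insert, not_or] at hp
  simp [starCol, hp.1, hp.2]

lemma IsSqCorrelation.starCol_self_mul (hW : IsSqCorrelation A W) (hp : p ∈ insert j S) :
    starCol A W j S j * starCol A W j S p = A j p := by
  rcases eq_or_ne p j with rfl | hpj
  · rw [starCol_self, sqrt_mul_self]
  refine eq_of_mul_self_eq ?_
  rw [starCol_self, starCol_of_mem ((mem_insert.1 hp).resolve_left hpj) hpj,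
    sqrt_mul_sqrt_mul_self, ← hW.isSymm.apply j p, hW.mul_self_eq]
  ring

lemma IsSqCorrelation.admissible_starCol (hW : IsSqCorrelation A W) (hj : j ∉ S)
    (hS : ∀ p ∈ S, ∀ q ∈ S, p ≠ q → W p j * W q j ≤ W p q) :
    Admissible A (starCol A W j S) := by
  have hleaf : ∀ p ∈ S, ∀ q ∈ S, starCol A W j S p * starCol A W j S q ≤ A p q := by
    intro p hp q hq
    rw [starCol_of_mem hp (ne_of_mem_of_not_mem hp hj),
      starCol_of_mem hq (ne_of_mem_of_not_mem hq hj)]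
    rcases eq_or_ne p q with rfl | hpq
    · rw [sqrt_mul_self]
      exact mul_le_left _ _
    refine le_of_mul_self_le_mul_self ?_
    rw [sqrt_mul_sqrt_mul_self, hW.mul_self_eq]
    calc A p p * W p j * (A q q * W q j) = A p p * A q q * (W p j * W q j) := by ring
      _ ≤ A p p * A q q * W p q := mul_le_mul' le_rfl (hS p hp q hq hpq)
  intro p q
  by_cases hp : p ∈ insert j S
  swap
  · rw [starCol_of_notMem hp, zero_mul]
    exact zero_le
  by_cases hq : q ∈ insert j S
  swap
  · rw [starCol_of_notMem hq, mul_zero]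
    exact zero_le
  rcases eq_or_ne p j with rfl | hpj
  · exact (hW.starCol_self_mul hq).le
  rcases eq_or_ne q j with rfl | hqj
  · rw [mul_comm, hW.starCol_self_mul hp, hW.isSymm.apply]
  exact hleaf p ((mem_insert.1 hp).resolve_left hpj) q ((mem_insert.1 hq).resolve_left hqj)

lemma IsSqCorrelation.admissible_starCol_empty (hW : IsSqCorrelation A W) :
    Admissible A (starCol A W j ∅) :=
  hW.admissible_starCol (notMem_empty j) (by simp)

lemma IsSqCorrelation.admissible_starCol_singleton (hW : IsSqCorrelation A W) (hjp : j ≠ p) :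
    Admissible A (starCol A W j {p}) :=
  hW.admissible_starCol (by simpa using hjp) (by simp)

lemma IsSqCorrelation.admissible_starCol_pair (hW : IsSqCorrelation A W) (hjp : j ≠ p)
    (hjq : j ≠ q) (h : W p j * W q j ≤ W p q) : Admissible A (starCol A W j {p, q}) := by
  have h' : W q j * W p j ≤ W q p :=
    (mul_comm _ _).trans_le (h.trans_eq (hW.isSymm_sq.apply p q).symm)
  refine hW.admissible_starCol (by simp [hjp, hjq]) ?_
  simp only [mem_insert, mem_singleton]
  rintro a (rfl | rfl) b (rfl | rfl) hab
  exacts [absurd rfl hab, h, h', absurd rfl hab]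

noncomputable def fan (A W : Matrix V V L) (u v : V) (T : Finset V) : List (V → L) :=
  T.toList.map fun w => starCol A W w {u, v}

lemma length_fan : (fan A W u v T).length = T.card := by
  simp [fan]

lemma IsSqCorrelation.covers_fan (hW : IsSqCorrelation A W) (hw : w ∈ T)
    (hp : p ∈ ({w, u, v} : Finset V)) : Covers A (fan A W u v T) w p :=
  ⟨_, List.mem_map.2 ⟨w, mem_toList.2 hw, rfl⟩, hW.starCol_self_mul hp⟩

lemma IsMaxPair.admissible_fan (hm : IsMaxPair W R u v) (hW : IsSqCorrelation A W)
    (hT : T ⊆ R \ {u, v}) : ∀ c ∈ fan A W u v T, Admissible A c := by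
  simp only [fan, List.mem_map, mem_toList]
  rintro _ ⟨w, hw, rfl⟩
  have hw' := hT hw
  simp only [mem_sdiff, mem_insert, mem_singleton, not_or] at hw'
  exact hW.admissible_starCol_pair hw'.2.1 hw'.2.2
    ((mul_le_left _ _).trans (hm.le u hm.left_mem w hw'.1 (Ne.symm hw'.2.1)))

lemma IsMaxPair.exists_pivotCover (hm : IsMaxPair W R u v) (hW : IsSqCorrelation A W) :
    ∃ cs, cs.length = R.card - 1 ∧ PivotCover A cs R u v v := by
  have hcard := hm.card_sdiff
  set cs := starCol A W u {v} :: fan A W u v (R \ {u, v})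
  have hfan : fan A W u v (R \ {u, v}) ⊆ cs := List.subset_cons_self _ _
  have hhead : ∀ p ∈ ({u, v} : Finset V), Covers A cs u p :=
    fun p hp => ⟨_, List.mem_cons_self, hW.starCol_self_mul hp⟩
  refine ⟨cs, by simp only [cs, List.length_cons, length_fan]; omega, ⟨?_, ?_, ?_, ?_⟩⟩
  · exact List.forall_mem_cons.2 ⟨hW.admissible_starCol_singleton hm.ne,
      hm.admissible_fan hW subset_rfl⟩
  · intro x hx hxu
    rcases eq_or_eq_or_mem_sdiff_pair (u := u) (v := v) hx with rfl | rfl | hx'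
    · exact absurd rfl hxu
    · exact (hhead x (by simp)).symm hW.isSymm
    · exact (hW.covers_fan hx' (by simp)).mono hfan
  · intro x hx hxv
    rcases eq_or_eq_or_mem_sdiff_pair (u := u) (v := v) hx with rfl | rfl | hx'
    · exact hhead v (by simp)
    · exact absurd rfl hxv
    · exact (hW.covers_fan hx' (by simp)).mono hfan
  · intro x hx hxv
    rcases eq_or_eq_or_mem_sdiff_pair (u := u) (v := v) hx with rfl | rfl | hx'
    · exact hhead x (by simp)
    · exact absurd rfl hxv
    · exact (hW.covers_fan hx' (by simp)).mono hfan

lemma exists_covers_of_card_le_one (hW : IsSqCorrelation A W) (hR : R.card ≤ 1) :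
    ∃ cs, cs.length ≤ R.card ∧ (∀ c ∈ cs, Admissible A c) ∧
      ∀ x ∈ R, ∀ y ∈ R, Covers A cs x y := by
  refine ⟨R.toList.map fun x => starCol A W x ∅, by simp, by simpa using
    fun _ _ => hW.admissible_starCol_empty, fun x hx y hy => ?_⟩
  obtain rfl := card_le_one.1 hR x hx y hy
  exact ⟨_, List.mem_map.2 ⟨x, mem_toList.2 hx, rfl⟩, hW.starCol_self_mul (mem_insert_self _ _)⟩

/-- The stars at `u` with leaves `{v, y}` and at `v` with leaf `y` replace the star at `u` with
leaf `v` and the one at `y`. -/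
lemma IsMaxPair.exists_pivotCover_of_mem_of_le (hm : IsMaxPair W R u v)
    (hW : IsSqCorrelation A W) (hy : y ∈ R \ {u, v}) (hyuv : W y u ≤ W y v) :
    ∃ cs, cs.length = R.card - 1 ∧ PivotCover A cs R u v y := by
  have hcard := hm.card_sdiff
  have hycard := card_erase_add_one hy
  have hy' := hy
  simp only [mem_sdiff, mem_insert, mem_singleton, not_or] at hy'
  obtain ⟨-, hyu, hyv⟩ := hy'
  set cs := starCol A W u {v, y} :: starCol A W v {y} :: fan A W u v ((R \ {u, v}).erase y)
  have hfan : fan A W u v ((R \ {u, v}).erase y) ⊆ cs :=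
    fun _ h => List.mem_cons_of_mem _ (List.mem_cons_of_mem _ h)
  have hu : ∀ p ∈ ({u, v, y} : Finset V), Covers A cs u p :=
    fun p hp => ⟨_, List.mem_cons_self, hW.starCol_self_mul hp⟩
  have hv : ∀ p ∈ ({v, y} : Finset V), Covers A cs v p :=
    fun p hp => ⟨_, List.mem_cons_of_mem _ List.mem_cons_self, hW.starCol_self_mul hp⟩
  refine ⟨cs, by simp only [cs, List.length_cons, length_fan]; omega, ⟨?_, ?_, ?_, ?_⟩⟩
  · refine List.forall_mem_cons.2 ⟨hW.admissible_starCol_pair hm.ne (Ne.symm hyu) ?_,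
      List.forall_mem_cons.2 ⟨hW.admissible_starCol_singleton (Ne.symm hyv),
        hm.admissible_fan hW (erase_subset _ _)⟩⟩
    calc W v u * W y u ≤ W y u := (mul_comm _ _).trans_le (mul_le_left _ _)
      _ ≤ W y v := hyuv
      _ = W v y := hW.isSymm_sq.apply v y
  · intro x hx hxu
    rcases eq_or_eq_or_eq_or_mem_erase (u := u) (v := v) (y := y) hx with rfl | rfl | rfl | hx'
    · exact absurd rfl hxu
    · exact (hu x (by simp)).symm hW.isSymm
    · exact (hu x (by simp)).symm hW.isSymm
    · exact (hW.covers_fan hx' (by simp)).mono hfan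
  · intro x hx hxv
    rcases eq_or_eq_or_eq_or_mem_erase (u := u) (v := v) (y := y) hx with rfl | rfl | rfl | hx'
    · exact hu v (by simp)
    · exact absurd rfl hxv
    · exact (hv x (by simp)).symm hW.isSymm
    · exact (hW.covers_fan hx' (by simp)).mono hfan
  · intro x hx hxy
    rcases eq_or_eq_or_eq_or_mem_erase (u := u) (v := v) (y := y) hx with rfl | rfl | rfl | hx'
    · exact hu x (by simp)
    · exact hv x (by simp)
    · exact absurd rfl hxy
    · exact (hW.covers_fan hx' (by simp)).mono hfan

variable [Std.Total (α := L) (· ≤ ·)]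

lemma IsMaxPair.exists_pivotCover_of_mem (hm : IsMaxPair W R u v) (hW : IsSqCorrelation A W)
    (hy : y ∈ R \ {u, v}) : ∃ cs, cs.length = R.card - 1 ∧ PivotCover A cs R u v y := by
  rcases total_of (· ≤ ·) (W y u) (W y v) with h | h
  · exact hm.exists_pivotCover_of_mem_of_le hW hy h
  · obtain ⟨cs, hlen, hcs⟩ :=
      (hm.symm hW.isSymm_sq).exists_pivotCover_of_mem_of_le hW (by rwa [pair_comm]) h
    exact ⟨cs, hlen, hcs.swap⟩

theorem exists_coversOffDiag (hW : IsSqCorrelation A W) (R : Finset V) :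
    ∃ cs, cs.length ≤ R.card ^ 2 / 4 ∧ (∀ c ∈ cs, Admissible A c) ∧ CoversOffDiag A cs R := by
  induction R using Finset.strongInduction with
  | H R ih =>
  rcases le_or_gt R.card 1 with hR | hR
  · exact ⟨[], by simp, by simp, fun x hx y hy hxy => absurd (card_le_one.1 hR x hx y hy) hxy⟩
  obtain ⟨u, v, hm⟩ := exists_isMaxPair W hR
  obtain ⟨cs, hlen, hcs⟩ := hm.exists_pivotCover hW
  obtain ⟨ds, hdlen, hds, hdcov⟩ :=
    ih _ (sdiff_ssubset (insert_subset hm.left_mem (singleton_subset_iff.2 hm.right_mem))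
      (insert_nonempty _ _))
  refine ⟨cs ++ ds, ?_, List.forall_mem_append.2 ⟨hcs.admissible, hds⟩,
    hcs.coversOffDiag_append hW.isSymm hdcov⟩
  rw [List.length_append, hlen, ← hm.card_sdiff, Nat.add_two_sq_div_four]
  omega

theorem exists_covers (hW : IsSqCorrelation A W) (R : Finset V) :
    ∃ cs, cs.length ≤ max R.card (R.card ^ 2 / 4) ∧ (∀ c ∈ cs, Admissible A c) ∧
      ∀ x ∈ R, ∀ y ∈ R, Covers A cs x y := by
  rcases le_or_gt R.card 1 with h1 | h1
  · obtain ⟨cs, hlen, hcs⟩ := exists_covers_of_card_le_one hW h1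
    exact ⟨cs, hlen.trans (le_max_left _ _), hcs⟩
  obtain ⟨u, v, hm⟩ := exists_isMaxPair W h1
  have hcard := hm.card_sdiff
  rcases le_or_gt R.card 3 with h3 | h3
  · obtain ⟨cs, hlen, hcs⟩ := hm.exists_pivotCover hW
    obtain ⟨ds, hdlen, hds, hdcov⟩ := exists_coversOffDiag hW (R \ {u, v})
    refine ⟨cs ++ (starCol A W v ∅ :: ds), ?_,
      List.forall_mem_append.2 ⟨hcs.admissible, List.forall_mem_cons.2
        ⟨hW.admissible_starCol_empty, hds⟩⟩,
      hcs.covers_append hW.isSymm ⟨_, List.mem_cons_self, hW.starCol_self_mul (mem_insert_self _ _)⟩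
        fun x hx y hy hxy => (hdcov x hx y hy hxy).mono (List.subset_cons_self _ _)⟩
    have : (R \ {u, v}).card ^ 2 / 4 = 0 := Nat.div_eq_of_lt (by nlinarith)
    simp only [List.length_append, List.length_cons]
    omega
  obtain ⟨u', v', hm'⟩ := exists_isMaxPair W (R := R \ {u, v}) (by omega)
  have hcard' := hm'.card_sdiff
  obtain ⟨cs, hlen, hcs⟩ := hm.exists_pivotCover_of_mem hW hm'.left_mem
  obtain ⟨ds, hdlen, hds⟩ := hm'.exists_pivotCover hW
  obtain ⟨es, helen, hes, hecov⟩ := exists_coversOffDiag hW ((R \ {u, v}) \ {u', v'})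
  refine ⟨cs ++ (ds ++ es), ?_,
    List.forall_mem_append.2 ⟨hcs.admissible, List.forall_mem_append.2 ⟨hds.admissible, hes⟩⟩,
    hcs.covers_append hW.isSymm
      ((hds.covers_diag u' hm'.left_mem hm'.ne).mono (List.subset_append_left _ _))
      (hds.coversOffDiag_append hW.isSymm hecov)⟩
  rw [List.length_append, List.length_append, hlen, hdlen, ← hcard, ← hcard',
    Nat.add_two_sq_div_four, Nat.add_two_sq_div_four]
  omega

theorem exists_mul_transpose_eq {ι : Type*} [Fintype V] [Fintype ι] (B : Matrix V ι L) :
    ∃ k ≤ max (Fintype.card V) (Fintype.card V ^ 2 / 4),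
      ∃ B' : Matrix V (Fin k) L, B * Bᵀ = B' * B'ᵀ := by
  obtain ⟨W, hW⟩ := exists_isSqCorrelation B
  obtain ⟨cs, hlen, hadm, hcov⟩ := exists_covers hW univ
  exact ⟨cs.length, by simpa using hlen, _,
    eq_mul_transpose_of_covers hadm fun p q => hcov p (mem_univ p) q (mem_univ q)⟩

end CompletelyPositive

/-- (Incline Drew–Johnson–Loewy bound) Over a totally ordered
normal incline, every n×n completely positive matrix has CP-rank at most
max{n, ⌊n²/4⌋}. -/
theorem stmt_10 {L : Type*} [CommSemiring L]
    (hidem : ∀ a : L, a + a = a)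
    (habs : ∀ a b : L, a + a * b = a)
    (hLI : ∀ x y : L, x + y = y → ∃ z : L, x = y * z)
    (hsq : ∀ x : L, ∃! c : L, c * c = x)
    (hAG : ∀ x y : L, x * y + (x * x + y * y) = x * x + y * y)
    (htot : ∀ x y : L, x + y = y ∨ y + x = x)
    (n : ℕ) (A : Matrix (Fin n) (Fin n) L)
    (hcp : ∃ m : ℕ, ∃ B : Matrix (Fin n) (Fin m) L, A = B * Bᵀ) :
    ∃ k : ℕ, k ≤ max n (n ^ 2 / 4) ∧
      ∃ B' : Matrix (Fin n) (Fin k) L, A = B' * B'ᵀ := by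
  let _ : IdemCommSemiring L := { ‹CommSemiring L›, IdemSemiring.ofSemiring hidem with }
  have : IsNormalIncline L := ⟨fun a b => (add_comm _ _).trans (habs a b), hLI _ _, hsq, hAG⟩
  have : Std.Total (α := L) (· ≤ ·) := ⟨htot⟩
  obtain ⟨m, B, rfl⟩ := hcp
  obtain ⟨k, hk, B', hB'⟩ := CompletelyPositive.exists_mul_transpose_eq B
  exact ⟨k, by simpa using hk, B', hB'⟩
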